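/- Equality of feasible sets for the completely bounded trace norm SDP: Let X, Y, Z be finite-dimensional complex vector spaces, let A ∈ L(X, Y⊗Z), and let W = ℂᵏ with k = max{dim(X), dim(Y⊗Z)}. Define Q = {W ∈ Pos(Y⊗Z) : Tr_Y(W) = Tr_Y(A ρ A*) for some density operator ρ ∈ D(X)} and R = {Tr_W[(U* ⊗ 1_Z)(A ⊗ 1_W) u u* (A* ⊗ 1_W)(U ⊗ 1_Z)] : u a unit vector in X⊗W, U a unitary operator on Y⊗W}. Then Q = R. -/

import Mathlib

open Matrix
open scoped Kronecker ComplexOrder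

noncomputable section

/-- The positive semidefinite square root of a positive semidefinite matrix
(the definition of `Matrix.PosSemidef.sqrt` in the older Mathlib, since removed). -/
def Matrix.PosSemidef.sqrt {n 𝕜 : Type*} [Fintype n] [DecidableEq n] [RCLike 𝕜]
    {A : Matrix n n 𝕜} (hA : A.PosSemidef) : Matrix n n 𝕜 :=
  hA.1.eigenvectorUnitary.1 * diagonal ((↑) ∘ (√·) ∘ hA.1.eigenvalues) *
  (star hA.1.eigenvectorUnitary : Matrix n n 𝕜)

/-- The trace norm `‖A‖₁ = Tr √(A* A)`. -/
def traceNorm {m n : Type*} [Fintype m] [Fintype n] [DecidableEq n]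
    (A : Matrix m n ℂ) : ℝ :=
  (Matrix.posSemidef_conjTranspose_mul_self A).sqrt.trace.re

/-- The spectral norm (operator norm w.r.t. Euclidean norms). -/
def specNorm {m n : Type*} [Fintype m] [Fintype n] [DecidableEq n]
    (A : Matrix m n ℂ) : ℝ :=
  ‖LinearMap.toContinuousLinearMap (Matrix.toEuclideanLin A)‖

/-- The Frobenius norm `‖A‖₂ = √Tr(A*A)`. -/
def frobeniusNorm {m n : Type*} [Fintype m] [Fintype n] (A : Matrix m n ℂ) : ℝ :=
  Real.sqrt ((Aᴴ * A).trace.re)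

/-- Partial trace over the first tensor factor. -/
def ptraceFst {y z : Type*} [Fintype y] (M : Matrix (y × z) (y × z) ℂ) : Matrix z z ℂ :=
  Matrix.of fun a b => ∑ i, M (i, a) (i, b)

/-- Partial trace over the second tensor factor. -/
def ptraceSnd {y z : Type*} [Fintype z] (M : Matrix (y × z) (y × z) ℂ) : Matrix y y ℂ :=
  Matrix.of fun i j => ∑ a, M (i, a) (j, a)

/-- The super-operator `Φ ⊗ 1_{L(W)}`, for `Φ : L(X) → L(Y)` and `W` indexed by `k`. -/
def tensorId {n m : Type*} [Fintype n] [Fintype m] (k : Type*) [Fintype k]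
    (Φ : Matrix n n ℂ →ₗ[ℂ] Matrix m m ℂ) :
    Matrix (n × k) (n × k) ℂ →ₗ[ℂ] Matrix (m × k) (m × k) ℂ where
  toFun M := Matrix.of fun p q => Φ (Matrix.of fun i j => M (i, p.2) (j, q.2)) p.1 q.1
  map_add' M N := by
    ext p q
    show Φ (Matrix.of fun i j => (M + N) (i, p.2) (j, q.2)) p.1 q.1 =
      Φ (Matrix.of fun i j => M (i, p.2) (j, q.2)) p.1 q.1 +
        Φ (Matrix.of fun i j => N (i, p.2) (j, q.2)) p.1 q.1
    have h : (Matrix.of fun i j => (M + N) (i, p.2) (j, q.2)) =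
        (Matrix.of fun i j => M (i, p.2) (j, q.2)) +
          (Matrix.of fun i j => N (i, p.2) (j, q.2)) := rfl
    rw [h, map_add]; rfl
  map_smul' c M := by
    ext p q
    show Φ (Matrix.of fun i j => (c • M) (i, p.2) (j, q.2)) p.1 q.1 =
      (c • Φ (Matrix.of fun i j => M (i, p.2) (j, q.2))) p.1 q.1
    have h : (Matrix.of fun i j => (c • M) (i, p.2) (j, q.2)) =
        c • (Matrix.of fun i j => M (i, p.2) (j, q.2)) := rfl
    rw [h, _root_.map_smul]

/-- The trace norm induced on super-operators. -/
def inducedTraceNorm {a b : Type*} [Fintype a] [DecidableEq a] [Fintype b] [DecidableEq b]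
    (Φ : Matrix a a ℂ →ₗ[ℂ] Matrix b b ℂ) : ℝ :=
  sSup {x : ℝ | ∃ X : Matrix a a ℂ, traceNorm X ≤ 1 ∧ x = traceNorm (Φ X)}

/-- The completely bounded trace norm (diamond norm):
`sup over k ≥ 1 of ‖Φ ⊗ 1_{L(ℂᵏ)}‖₁`. -/
def diamondNorm {n m : Type*} [Fintype n] [DecidableEq n] [Fintype m] [DecidableEq m]
    (Φ : Matrix n n ℂ →ₗ[ℂ] Matrix m m ℂ) : ℝ :=
  ⨆ k : ℕ, inducedTraceNorm (tensorId (Fin (k + 1)) Φ)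


/-- Choi–Jamiołkowski representation `J(Φ) = Σ_{i,j} Φ(E_{i,j}) ⊗ E_{i,j}`. -/
def choi {n m : Type*} [Fintype n] [DecidableEq n] [Fintype m]
    (Φ : Matrix n n ℂ →ₗ[ℂ] Matrix m m ℂ) : Matrix (m × n) (m × n) ℂ :=
  ∑ i : n, ∑ j : n, (Φ (Matrix.single i j 1)) ⊗ₖ (Matrix.single i j 1)

/-- A quantum channel: a completely positive and trace-preserving super-operator. -/
def IsQuantumChannel {n m : Type*} [Fintype n] [Fintype m]
    (Φ : Matrix n n ℂ →ₗ[ℂ] Matrix m m ℂ) : Prop :=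
  (∀ (k : ℕ) (P : Matrix (n × Fin k) (n × Fin k) ℂ), P.PosSemidef →
      (tensorId (Fin k) Φ P).PosSemidef) ∧
    ∀ X : Matrix n n ℂ, (Φ X).trace = X.trace

open Classical in
/-- Square root of a positive semidefinite matrix (junk value `0` otherwise). -/
def matSqrt {r : Type*} [Fintype r] [DecidableEq r] (P : Matrix r r ℂ) : Matrix r r ℂ :=
  if h : P.PosSemidef then h.sqrt else 0

/-- The fidelity `F(P,Q) = ‖√P √Q‖₁`. -/
def fidelity {r : Type*} [Fintype r] [DecidableEq r] (P Q : Matrix r r ℂ) : ℝ :=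
  traceNorm (matSqrt P * matSqrt Q)

/-- `U ⊗ 1_Z` regarded as an operator on `(Y ⊗ Z) ⊗ W`, for `U` an operator
on `Y ⊗ W` (the tensor factors being appropriately identified). -/
def unitaryTensorIdZ {m r k : Type*} [DecidableEq r]
    (U : Matrix (m × k) (m × k) ℂ) :
    Matrix ((m × r) × k) ((m × r) × k) ℂ :=
  Matrix.of fun p q => (if p.1.2 = q.1.2 then U (p.1.1, p.2) (q.1.1, q.2) else 0)


/-!
Reshaping a vector `y ∈ Y ⊗ Z ⊗ ℂᵏ` into an operator `M : ℂᵏ → Y ⊗ Z` gives `Tr_W (y y*) = M M*`;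
reshaping it into `N : Z → Y ⊗ ℂᵏ` gives `(Tr_Y Tr_W (y y*))ᵀ = N* N`. A unitary `U` on `Y ⊗ ℂᵏ`
turns `N` into `U N`, so `Tr_Y` of the elements of `R` is that of `(A ⊗ 1) u`, which is
`Tr_Y (A ρ A*)` for `ρ = Tr_W (u u*)`: this is `R ⊆ Q`. Conversely, `k ≥ dim X, dim (Y ⊗ Z)` lets
us purify `ρ` and `W` to `u` and `w`; then `(A ⊗ 1) u` and `w` reshape to `N₁, N₂ : Z → Y ⊗ ℂᵏ`
with `N₁* N₁ = N₂* N₂`, so `N₁ = U N₂` for a unitary `U`: the isometry `N₂ z ↦ N₁ z` between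
their ranges extends to the whole space.
-/

open scoped InnerProductSpace

theorem LinearMap.exists_linearIsometry_comp_eq_of_norm_eq {𝕜 V W : Type*} [RCLike 𝕜]
    [AddCommGroup V] [Module 𝕜 V] [NormedAddCommGroup W] [InnerProductSpace 𝕜 W]
    [FiniteDimensional 𝕜 W] {f g : V →ₗ[𝕜] W} (h : ∀ x, ‖f x‖ = ‖g x‖) :
    ∃ T : W →ₗᵢ[𝕜] W, ∀ x, T (g x) = f x := by
  have hker : ker g ≤ ker f := fun x hx => by
    rw [mem_ker, ← norm_eq_zero, h, norm_eq_zero, ← mem_ker]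
    exact hx
  let L := (ker g).liftQ f hker ∘ₗ g.quotKerEquivRange.symm.toLinearMap
  have hL : ∀ x, L ⟨g x, mem_range_self g x⟩ = f x := fun x => by
    simp [L, quotKerEquivRange_symm_apply_image]
  let S : range g →ₗᵢ[𝕜] W := ⟨L, by rintro ⟨-, x, rfl⟩; rw [hL]; exact h x⟩
  exact ⟨S.extend, fun x => (S.extend_apply ⟨g x, mem_range_self g x⟩).trans (hL x)⟩

namespace Matrix

section Unitary

variable {𝕜 e z : Type*} [RCLike 𝕜] [Fintype e] [DecidableEq e] [Fintype z] [DecidableEq z]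

theorem inner_toEuclideanLin_toEuclideanLin (M : Matrix e z 𝕜) (x y : EuclideanSpace 𝕜 z) :
    ⟪toEuclideanLin M x, toEuclideanLin M y⟫_𝕜 = ⟪x, toEuclideanLin (Mᴴ * M) y⟫_𝕜 := by
  rw [toLpLin_mul_same, toEuclideanLin_conjTranspose_eq_adjoint, LinearMap.comp_apply,
    LinearMap.adjoint_inner_right]

theorem norm_toEuclideanLin_eq_of_conjTranspose_mul_self_eq {M N : Matrix e z 𝕜}
    (h : Mᴴ * M = Nᴴ * N) (x : EuclideanSpace 𝕜 z) :
    ‖toEuclideanLin M x‖ = ‖toEuclideanLin N x‖ := by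
  rw [norm_eq_sqrt_re_inner (𝕜 := 𝕜), norm_eq_sqrt_re_inner (𝕜 := 𝕜),
    inner_toEuclideanLin_toEuclideanLin, inner_toEuclideanLin_toEuclideanLin, h]

theorem exists_mem_unitaryGroup_mul_eq_of_conjTranspose_mul_self_eq {M N : Matrix e z 𝕜}
    (h : Mᴴ * M = Nᴴ * N) : ∃ U ∈ unitaryGroup e 𝕜, M = U * N := by
  obtain ⟨T, hT⟩ := LinearMap.exists_linearIsometry_comp_eq_of_norm_eq
    (norm_toEuclideanLin_eq_of_conjTranspose_mul_self_eq h)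
  let b := EuclideanSpace.basisFun e 𝕜
  let T' := T.toLinearIsometryEquiv rfl
  have hU : toEuclideanLin (T'.toMatrix b.toBasis b.toBasis) = T.toLinearMap := by
    rw [toEuclideanLin_eq_toLin_orthonormal, toLin_toMatrix]
    rfl
  refine ⟨_, T'.toMatrix_mem_unitaryGroup b b, toEuclideanLin.injective ?_⟩
  rw [toLpLin_mul_same, hU]
  exact LinearMap.ext fun x => (hT x).symm

end Unitary

section Factorization

variable {𝕜 : Type*} [RCLike 𝕜]

open scoped MatrixOrder in
theorem PosSemidef.exists_eq_mul_conjTranspose {p : Type*} [Fintype p] [DecidableEq p]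
    {P : Matrix p p 𝕜} (hP : P.PosSemidef) : ∃ B : Matrix p p 𝕜, P = B * Bᴴ := by
  obtain ⟨B, hB⟩ := CStarAlgebra.nonneg_iff_eq_star_mul_self.mp hP.nonneg
  exact ⟨Bᴴ, by rw [hB, conjTranspose_conjTranspose]; rfl⟩

theorem exists_mul_conjTranspose_eq_of_card_le {p n k : Type*} [Fintype n] [Fintype k]
    [DecidableEq n] [DecidableEq k]
    (C : Matrix p n 𝕜) (hcard : Fintype.card n ≤ Fintype.card k) :
    ∃ C' : Matrix p k 𝕜, C' * C'ᴴ = C * Cᴴ := by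
  obtain ⟨f⟩ := Function.Embedding.nonempty_of_card_le hcard
  let V : Matrix n k 𝕜 := (1 : Matrix k k 𝕜).submatrix f id
  have hV : V * Vᴴ = 1 := by
    rw [conjTranspose_submatrix, conjTranspose_one,
      ← submatrix_mul _ _ _ _ _ Function.bijective_id, Matrix.mul_one, submatrix_one _ f.injective]
  exact ⟨C * V, by rw [conjTranspose_mul, Matrix.mul_assoc, ← Matrix.mul_assoc V, hV,
    Matrix.one_mul]⟩

end Factorization

end Matrix

open Matrix

/-- Row-major reshaping, the inverse of Watrous's `vec`; Mathlib's `Matrix.vec` stacks columns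
instead. -/
def unvec {α p k : Type*} (x : p × k → α) : Matrix p k α :=
  of fun a j => x (a, j)

section Unvec

variable {p q k : Type*} [Fintype k]

theorem ptraceSnd_vecMulVec_star (x : p × k → ℂ) :
    ptraceSnd (vecMulVec x (star x)) = unvec x * (unvec x)ᴴ := by
  ext a b
  simp [ptraceSnd, unvec, vecMulVec_apply, mul_apply]

theorem mul_vecMulVec_star_mul_conjTranspose {α : Type*} [NonUnitalSemiring α] [StarRing α]
    [Fintype p] (C : Matrix q p α) (x : p → α) :
    C * vecMulVec x (star x) * Cᴴ = vecMulVec (C *ᵥ x) (star (C *ᵥ x)) := by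
  simp only [vecMulVec_eq Unit, ← conjTranspose_replicateCol, replicateCol_mulVec,
    conjTranspose_mul, Matrix.mul_assoc]

theorem ptraceSnd_conj_vecMulVec_star [Fintype q] (C : Matrix (p × k) q ℂ) (x : q → ℂ) :
    ptraceSnd (C * vecMulVec x (star x) * Cᴴ) = unvec (C *ᵥ x) * (unvec (C *ᵥ x))ᴴ := by
  rw [mul_vecMulVec_star_mul_conjTranspose, ptraceSnd_vecMulVec_star]

theorem unvec_kronecker_one_mulVec [Fintype p] [DecidableEq k] (A : Matrix q p ℂ)
    (x : p × k → ℂ) :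
    unvec ((A ⊗ₖ (1 : Matrix k k ℂ)) *ᵥ x) = A * unvec x := by
  ext a j
  simp [unvec, mulVec, dotProduct, mul_apply, Fintype.sum_prod_type, one_apply]

theorem trace_unvec_mul_conjTranspose [Fintype p] (x : p × k → ℂ) :
    (unvec x * (unvec x)ᴴ).trace = star x ⬝ᵥ x := by
  simp [unvec, trace, mul_apply, dotProduct, Fintype.sum_prod_type, mul_comm]

theorem exists_unvec_mul_conjTranspose_eq [Fintype p] [DecidableEq p] [DecidableEq k]
    {P : Matrix p p ℂ} (hP : P.PosSemidef) (hcard : Fintype.card p ≤ Fintype.card k) :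
    ∃ x : p × k → ℂ, unvec x * (unvec x)ᴴ = P := by
  obtain ⟨B, rfl⟩ := hP.exists_eq_mul_conjTranspose
  obtain ⟨C, hC⟩ := exists_mul_conjTranspose_eq_of_card_le B hcard
  exact ⟨fun a => C a.1 a.2, hC⟩

end Unvec

section Tripartite

variable {m r k : Type*}

def unvecMid (x : (m × r) × k → ℂ) : Matrix (m × k) r ℂ :=
  of fun a c => x ((a.1, c), a.2)

theorem unvecMid_injective : Function.Injective (unvecMid (m := m) (r := r) (k := k)) :=
  fun _ _ h => funext fun a => congrFun (congrFun h (a.1.1, a.2)) a.1.2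

theorem conjTranspose_unitaryTensorIdZ [DecidableEq r] (U : Matrix (m × k) (m × k) ℂ) :
    (unitaryTensorIdZ (r := r) U)ᴴ = unitaryTensorIdZ Uᴴ := by
  ext a b
  simp only [unitaryTensorIdZ, conjTranspose_apply, of_apply, eq_comm, RCLike.star_def]
  split <;> simp

theorem unvecMid_unitaryTensorIdZ_mulVec [Fintype m] [Fintype r] [Fintype k] [DecidableEq r]
    (V : Matrix (m × k) (m × k) ℂ) (x : (m × r) × k → ℂ) :
    unvecMid (unitaryTensorIdZ V *ᵥ x) = V * unvecMid x := by
  ext a c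
  simp [unvecMid, mulVec, dotProduct, unitaryTensorIdZ, mul_apply, Fintype.sum_prod_type]

theorem ptraceFst_unvec_mul_conjTranspose [Fintype m] [Fintype k] (x : (m × r) × k → ℂ) :
    ptraceFst (unvec x * (unvec x)ᴴ) = ((unvecMid x)ᴴ * unvecMid x)ᵀ := by
  ext c d
  simp [ptraceFst, unvec, unvecMid, mul_apply, Fintype.sum_prod_type, mul_comm]

theorem ptraceFst_unvec_unitaryTensorIdZ_mulVec [Fintype m] [Fintype r] [Fintype k]
    [DecidableEq m] [DecidableEq r] [DecidableEq k] {U : Matrix (m × k) (m × k) ℂ}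
    (hU : Uᴴ * U = 1) (x : (m × r) × k → ℂ) :
    ptraceFst (unvec ((unitaryTensorIdZ U)ᴴ *ᵥ x) * (unvec ((unitaryTensorIdZ U)ᴴ *ᵥ x))ᴴ) =
      ptraceFst (unvec x * (unvec x)ᴴ) := by
  rw [ptraceFst_unvec_mul_conjTranspose, ptraceFst_unvec_mul_conjTranspose,
    conjTranspose_unitaryTensorIdZ, unvecMid_unitaryTensorIdZ_mulVec, conjTranspose_mul,
    conjTranspose_conjTranspose, Matrix.mul_assoc, ← Matrix.mul_assoc U, mul_eq_one_comm.mp hU,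
    Matrix.one_mul]

theorem exists_unitaryTensorIdZ_mulVec_eq_of_ptraceFst_eq [Fintype m] [Fintype r] [Fintype k]
    [DecidableEq m] [DecidableEq r] [DecidableEq k]
    {x y : (m × r) × k → ℂ}
    (h : ptraceFst (unvec x * (unvec x)ᴴ) = ptraceFst (unvec y * (unvec y)ᴴ)) :
    ∃ U : Matrix (m × k) (m × k) ℂ, Uᴴ * U = 1 ∧ (unitaryTensorIdZ U)ᴴ *ᵥ x = y := by
  rw [ptraceFst_unvec_mul_conjTranspose, ptraceFst_unvec_mul_conjTranspose, transpose_inj] at h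
  obtain ⟨V, hV, hVy⟩ := exists_mem_unitaryGroup_mul_eq_of_conjTranspose_mul_self_eq h.symm
  refine ⟨Vᴴ, ?_, unvecMid_injective ?_⟩
  · rw [conjTranspose_conjTranspose]; exact (mem_unitaryGroup_iff.mp hV)
  · rw [conjTranspose_unitaryTensorIdZ, conjTranspose_conjTranspose,
      unvecMid_unitaryTensorIdZ_mulVec, hVy]

end Tripartite

/-- Equality of the feasible sets for the completely bounded trace norm SDP,
with `W = ℂᵏ` for `k = max (dim X) (dim (Y ⊗ Z))`. -/
theorem cb_trace_norm_feasible_sets_eq {n m r : ℕ}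
    (A : Matrix (Fin m × Fin r) (Fin n) ℂ) :
    {W : Matrix (Fin m × Fin r) (Fin m × Fin r) ℂ | W.PosSemidef ∧
        ∃ ρ : Matrix (Fin n) (Fin n) ℂ, ρ.PosSemidef ∧ ρ.trace = 1 ∧
          ptraceFst W = ptraceFst (A * ρ * Aᴴ)} =
    {W : Matrix (Fin m × Fin r) (Fin m × Fin r) ℂ |
        ∃ (u : Fin n × Fin (max n (m * r)) → ℂ)
          (U : Matrix (Fin m × Fin (max n (m * r))) (Fin m × Fin (max n (m * r))) ℂ),
          star u ⬝ᵥ u = 1 ∧ Uᴴ * U = 1 ∧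
          W = ptraceSnd ((unitaryTensorIdZ (r := Fin r) U)ᴴ *
            ((A ⊗ₖ (1 : Matrix (Fin (max n (m * r))) (Fin (max n (m * r))) ℂ)) *
              vecMulVec u (star u) *
              (A ⊗ₖ (1 : Matrix (Fin (max n (m * r))) (Fin (max n (m * r))) ℂ))ᴴ) *
            unitaryTensorIdZ (r := Fin r) U)} := by
  set k := max n (m * r)
  have hR : ∀ (u : Fin n × Fin k → ℂ) (U : Matrix (Fin m × Fin k) (Fin m × Fin k) ℂ),
      ptraceSnd ((unitaryTensorIdZ (r := Fin r) U)ᴴ * ((A ⊗ₖ (1 : Matrix (Fin k) (Fin k) ℂ)) *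
        vecMulVec u (star u) * (A ⊗ₖ (1 : Matrix (Fin k) (Fin k) ℂ))ᴴ) * unitaryTensorIdZ U) =
      unvec ((unitaryTensorIdZ U)ᴴ *ᵥ ((A ⊗ₖ (1 : Matrix (Fin k) (Fin k) ℂ)) *ᵥ u)) *
        (unvec ((unitaryTensorIdZ U)ᴴ *ᵥ ((A ⊗ₖ (1 : Matrix (Fin k) (Fin k) ℂ)) *ᵥ u)))ᴴ :=
      fun u U => by
    rw [mulVec_mulVec, ← ptraceSnd_conj_vecMulVec_star]
    simp only [conjTranspose_mul, conjTranspose_conjTranspose, Matrix.mul_assoc]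
  have hAρA : ∀ u : Fin n × Fin k → ℂ, A * (unvec u * (unvec u)ᴴ) * Aᴴ =
      unvec ((A ⊗ₖ (1 : Matrix (Fin k) (Fin k) ℂ)) *ᵥ u) *
        (unvec ((A ⊗ₖ (1 : Matrix (Fin k) (Fin k) ℂ)) *ᵥ u))ᴴ := fun u => by
    simp only [unvec_kronecker_one_mulVec, conjTranspose_mul, Matrix.mul_assoc]
  ext W
  simp only [Set.mem_ofPred_eq, hR]
  constructor
  · rintro ⟨hW, ρ, hρ, hρ_tr, hWρ⟩
    obtain ⟨u, rfl⟩ := exists_unvec_mul_conjTranspose_eq (k := Fin k) hρ (by simp [k])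
    obtain ⟨w, rfl⟩ := exists_unvec_mul_conjTranspose_eq (k := Fin k) hW (by simp [k])
    rw [hAρA] at hWρ
    obtain ⟨U, hU, hUw⟩ := exists_unitaryTensorIdZ_mulVec_eq_of_ptraceFst_eq hWρ.symm
    exact ⟨u, U, trace_unvec_mul_conjTranspose u ▸ hρ_tr, hU, by rw [hUw]⟩
  · rintro ⟨u, U, hu, hU, rfl⟩
    exact ⟨posSemidef_self_mul_conjTranspose _, _, posSemidef_self_mul_conjTranspose _,
      (trace_unvec_mul_conjTranspose u).trans hu,
      by rw [ptraceFst_unvec_unitaryTensorIdZ_mulVec hU, hAρA]⟩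

end
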